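/- Let a Runge-Kutta method with coefficients (a_{ij}, b_i) applied to an ODE u' = f(u) in an inner product space satisfy ⟨u, f(u)⟩ = 0 for all u (so that I(u) = ⟨u,u⟩ is an invariant). If the coefficients satisfy b_i a_{ij} + b_j a_{ji} = b_i b_j for all i, j, then the method preserves the quadratic invariant: ⟨u^{n+1}, u^{n+1}⟩ = ⟨u^n, u^n⟩, where y_i = u^n + Δt Σ_j a_{ij} f(y_j) and u^{n+1} = u^n + Δt Σ_i b_i f(y_i). -/
import Mathlib


open scoped RealInnerProductSpace

/-- A Runge–Kutta method whose coefficients satisfy `bᵢaᵢⱼ + bⱼaⱼᵢ = bᵢbⱼ`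
preserves the quadratic invariant `⟨u,u⟩` for systems with `⟨u, f(u)⟩ = 0`. -/
theorem rk_preserves_quadratic_invariant
    (H : Type*) [NormedAddCommGroup H] [InnerProductSpace ℝ H]
    (f : H → H) (hf : ∀ u : H, ⟪u, f u⟫ = 0)
    (s : ℕ) (a : Fin s → Fin s → ℝ) (b : Fin s → ℝ)
    (hcoef : ∀ i j, b i * a i j + b j * a j i = b i * b j)
    (Δt : ℝ) (un unext : H) (y : Fin s → H)
    (hstage : ∀ i, y i = un + Δt • ∑ j, a i j • f (y j))
    (hstep : unext = un + Δt • ∑ i, b i • f (y i)) :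
    ⟪unext, unext⟫ = ⟪un, un⟫ := by
  set g : Fin s → H := fun i => f (y i) with hg
  have hun : ∀ i, ⟪un, g i⟫ = -(Δt * ∑ j, a i j * ⟪g j, g i⟫) := by
    intro i
    have h1 : un = y i - Δt • ∑ j, a i j • g j := by
      rw [hstage i]; abel
    have h2 : ⟪y i, g i⟫ = 0 := hf (y i)
    rw [h1, inner_sub_left, h2, real_inner_smul_left, sum_inner]
    simp [real_inner_smul_left]
  have hv : ⟪Δt • ∑ i, b i • g i, Δt • ∑ i, b i • g i⟫
      = Δt * (Δt * ∑ i, ∑ j, b i * (b j * ⟪g i, g j⟫)) := by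
    rw [real_inner_smul_left, real_inner_smul_right, sum_inner]
    congr 2
    congr 1
    funext i
    rw [real_inner_smul_left, inner_sum]
    simp [real_inner_smul_right, Finset.mul_sum]
  have huv : ⟪un, Δt • ∑ i, b i • g i⟫
      = -(Δt * (Δt * ∑ i, ∑ j, b i * (a i j * ⟪g j, g i⟫))) := by
    rw [real_inner_smul_right, inner_sum]
    simp only [real_inner_smul_right, hun]
    rw [Finset.mul_sum (f := fun i => b i * -(Δt * ∑ j, a i j * ⟪g j, g i⟫)),
      Finset.mul_sum (f := fun i => ∑ j, b i * (a i j * ⟪g j, g i⟫)),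
      Finset.mul_sum, ← Finset.sum_neg_distrib]
    refine Finset.sum_congr rfl fun i _ => ?_
    rw [← Finset.mul_sum (f := fun j => a i j * ⟪g j, g i⟫)]
    ring
  have key : ∑ i, ∑ j, b i * (b j * ⟪g i, g j⟫)
      = 2 * ∑ i, ∑ j, b i * (a i j * ⟪g j, g i⟫) := by
    have : ∀ i j, b i * (b j * ⟪g i, g j⟫)
        = b i * (a i j * ⟪g j, g i⟫) + b j * (a j i * ⟪g i, g j⟫) := by
      intro i j
      have hsym : ⟪g i, g j⟫ = ⟪g j, g i⟫ := real_inner_comm _ _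
      linear_combination (-⟪g i, g j⟫) * hcoef i j + (b i * a i j) * hsym
    calc ∑ i, ∑ j, b i * (b j * ⟪g i, g j⟫)
        = ∑ i, ∑ j, (b i * (a i j * ⟪g j, g i⟫) + b j * (a j i * ⟪g i, g j⟫)) := by
          simp_rw [this]
      _ = (∑ i, ∑ j, b i * (a i j * ⟪g j, g i⟫))
          + ∑ i, ∑ j, b j * (a j i * ⟪g i, g j⟫) := by
          rw [← Finset.sum_add_distrib]; congr 1; funext i; rw [Finset.sum_add_distrib]
      _ = 2 * ∑ i, ∑ j, b i * (a i j * ⟪g j, g i⟫) := by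
          rw [Finset.sum_comm (f := fun i j => b j * (a j i * ⟪g i, g j⟫))]
          ring
  rw [hstep, real_inner_add_add_self, huv, hv, key]
  ring
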